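/- arXiv:1501.02695 — 2 statements merged into one kernel-verified Lean document; each statement's English description precedes it below -/
import Mathlib

section
/- Fix an integer k ≥ 2 and define g_k(λ) = λ·f_{k−1}(λ)/f_k(λ) and ψ-values via h̃(λ) = e^{−λ} λ^{k−1} / (f_{k−1}(λ)·(k−1)!). Then the function ψ(x) = h̃(λ(x)), where λ(x) > 0 is a root of g_k(λ) = x, is strictly decreasing on (k, ∞): for all reals x₁, x₂ with k < x₁ < x₂ and all λ₁, λ₂ > 0 satisfying g_k(λ₁) = x₁ and g_k(λ₂) = x₂, one has h̃(λ₂) < h̃(λ₁). -/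
/-- `fPo k μ = e^{-μ} ∑_{i ≥ k} μ^i / i!`, the probability that a Poisson random
variable with mean `μ` is at least `k`. -/
noncomputable def fPo (k : ℕ) (μ : ℝ) : ℝ :=
  Real.exp (-μ) * ∑' i : ℕ, μ ^ (k + i) / (Nat.factorial (k + i) : ℝ)

/-- `gPo k x = x * f_{k-1}(x) / f_k(x)`. -/
noncomputable def gPo (k : ℕ) (x : ℝ) : ℝ := x * fPo (k - 1) x / fPo k x

/-- `htil k λ = e^{-λ} λ^{k-1} / (f_{k-1}(λ) (k-1)!)`. -/
noncomputable def htil (k : ℕ) (l : ℝ) : ℝ :=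
  Real.exp (-l) * l ^ (k - 1) / (fPo (k - 1) l * (Nat.factorial (k - 1) : ℝ))

/-!
Write `E_k(x) = ∑_{j ≥ 0} x^j / (k+j)!`, so that `f_k(x) = e^{-x} x^k E_k(x)` and
`E_{k-1}(x) = 1/(k-1)! + x E_k(x)`. Then `g_k(x) = x + 1/((k-1)! E_k(x))` and
`h̃(x) = 1/((k-1)! E_{k-1}(x))`. As `E_{k-1}` is increasing, it suffices that `g_k` is strictly
increasing, i.e. that `E_k(b) - E_k(a) < (b - a) (k-1)! E_k(a) E_k(b)` for `0 ≤ a < b`.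
Expanding `b^{n+1} - a^{n+1} = (b - a) ∑_{i+j=n} a^i b^j` on the left and taking the Cauchy
product on the right, this holds coefficientwise because `(k+i)! (k+j)! < (k-1)! (k+i+j+1)!`.
-/

open Finset
open scoped Nat

noncomputable def expTail (k : ℕ) (x : ℝ) : ℝ := ∑' j : ℕ, x ^ j / (k + j)!

/-- The divided difference `(expTail k b - expTail k a) / (b - a)`, expanded as a power series
in `a` and `b`. -/
noncomputable def expTailSlope (k : ℕ) (a b : ℝ) : ℝ :=
  ∑' n : ℕ, (∑ p ∈ antidiagonal n, a ^ p.1 * b ^ p.2) / (k + 1 + n)!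

lemma sub_mul_sum_antidiagonal_pow_mul_pow {R : Type*} [CommRing R] (a b : R) (n : ℕ) :
    (b - a) * ∑ p ∈ antidiagonal n, a ^ p.1 * b ^ p.2 = b ^ (n + 1) - a ^ (n + 1) := by
  rw [Nat.sum_antidiagonal_eq_sum_range_succ_mk, ← (Commute.all a b).mul_neg_geom_sum₂]
  simp only [Nat.add_sub_cancel]

section expTail

variable (k : ℕ)

lemma summable_norm_expTail (x : ℝ) : Summable fun j : ℕ => ‖x ^ j / (k + j)!‖ := by
  refine (Real.summable_pow_div_factorial |x|).of_nonneg_of_le (fun _ => norm_nonneg _) fun j => ?_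
  rw [norm_div, norm_pow, Real.norm_eq_abs, Real.norm_natCast]
  gcongr
  omega

lemma summable_expTail (x : ℝ) : Summable fun j : ℕ => x ^ j / (k + j)! :=
  (summable_norm_expTail k x).of_norm

lemma expTail_pos {x : ℝ} (hx : 0 ≤ x) : 0 < expTail k x :=
  (summable_expTail k x).tsum_pos (fun j => by positivity) 0 (by simp; positivity)

lemma expTail_strictMonoOn : StrictMonoOn (expTail k) (Set.Ici 0) := by
  intro a (ha : 0 ≤ a) b _ hab
  refine (summable_expTail k a).tsum_lt_tsum (i := 1) (fun j => ?_) ?_ (summable_expTail k b)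
  · gcongr
  · simpa using div_lt_div_of_pos_right hab (by positivity)

lemma pow_mul_expTail (x : ℝ) : x ^ k * expTail k x = ∑' i : ℕ, x ^ (k + i) / (k + i)! := by
  rw [expTail, ← tsum_mul_left]
  simp only [pow_add, mul_div_assoc]

lemma expTail_eq_inv_factorial_add (x : ℝ) : expTail k x = 1 / k ! + x * expTail (k + 1) x := by
  rw [expTail, (summable_expTail k x).tsum_eq_zero_add, expTail, ← tsum_mul_left]
  simp only [pow_zero, add_zero, add_right_comm k 1]
  exact congrArg _ <| tsum_congr fun j => by rw [pow_succ', ← add_assoc, mul_div_assoc]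

lemma expTail_sub_expTail (a b : ℝ) :
    expTail k b - expTail k a = (b - a) * expTailSlope k a b := by
  have hsub := (summable_expTail k b).sub (summable_expTail k a)
  rw [expTail, expTail, ← (summable_expTail k b).tsum_sub (summable_expTail k a),
    hsub.tsum_eq_zero_add, expTailSlope, ← tsum_mul_left]
  simp only [pow_zero, sub_self, zero_add]
  exact tsum_congr fun n => by
    rw [← sub_div, mul_div_assoc', sub_mul_sum_antidiagonal_pow_mul_pow, add_comm (k + 1) n,
      add_left_comm]

lemma expTail_mul_expTail (a b : ℝ) :
    expTail k a * expTail k b =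
      ∑' n : ℕ, ∑ p ∈ antidiagonal n, a ^ p.1 / (k + p.1)! * (b ^ p.2 / (k + p.2)!) :=
  tsum_mul_tsum_eq_tsum_sum_antidiagonal_of_summable_norm
    (summable_norm_expTail k a) (summable_norm_expTail k b)

end expTail

lemma fPo_eq (k : ℕ) (x : ℝ) : fPo k x = Real.exp (-x) * (x ^ k * expTail k x) := by
  rw [fPo, pow_mul_expTail]

lemma factorial_mul_factorial_lt (m i l : ℕ) :
    (m + 1 + i)! * (m + 1 + l)! < m ! * (m + 1 + 1 + (i + l))! := by
  have hi : (m + 1 + i)! = m ! * (m + 1).ascFactorial (i + 1) := by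
    rw [Nat.factorial_mul_ascFactorial, add_right_comm, add_assoc]
  have hil : (m + 1 + 1 + (i + l))! = (m + 1 + l)! * (m + 1 + l + 1).ascFactorial (i + 1) := by
    rw [Nat.factorial_mul_ascFactorial]
    congr 1
    omega
  have hasc : (m + 1).ascFactorial (i + 1) < (m + 1 + l + 1).ascFactorial (i + 1) := by
    rw [Nat.ascFactorial_succ, Nat.ascFactorial_succ]
    exact Nat.mul_lt_mul_of_lt_of_le (by omega) (Nat.ascFactorial_le i (by omega))
      (Nat.ascFactorial_pos _ _)
  rw [hi, hil, mul_right_comm, mul_assoc]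
  gcongr

lemma inv_factorial_lt_factorial_div (m i l : ℕ) :
    ((m + 1 + 1 + (i + l))! : ℝ)⁻¹ < m ! / ((m + 1 + i)! * (m + 1 + l)!) := by
  rw [inv_eq_one_div, div_lt_div_iff₀ (by positivity) (by positivity), one_mul]
  exact_mod_cast factorial_mul_factorial_lt m i l

lemma expTailSlope_lt_mul (m : ℕ) {a b : ℝ} (ha : 0 ≤ a) (hb : 0 ≤ b) :
    expTailSlope (m + 1) a b < m ! * (expTail (m + 1) a * expTail (m + 1) b) := by
  have hprod : Summable fun n =>
      ∑ p ∈ antidiagonal n, a ^ p.1 / (m + 1 + p.1)! * (b ^ p.2 / (m + 1 + p.2)!) :=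
    (summable_norm_sum_mul_antidiagonal_of_summable_norm
      (summable_norm_expTail (m + 1) a) (summable_norm_expTail (m + 1) b)).of_norm
  have hle : ∀ n : ℕ, (∑ p ∈ antidiagonal n, a ^ p.1 * b ^ p.2) / (m + 1 + 1 + n)! ≤
      m ! * ∑ p ∈ antidiagonal n, a ^ p.1 / (m + 1 + p.1)! * (b ^ p.2 / (m + 1 + p.2)!) := by
    intro n
    rw [sum_div, mul_sum]
    refine sum_le_sum fun p hp => ?_
    rw [HasAntidiagonal.mem_antidiagonal] at hp
    subst hp
    calc a ^ p.1 * b ^ p.2 / (m + 1 + 1 + (p.1 + p.2))!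
        = a ^ p.1 * b ^ p.2 * ((m + 1 + 1 + (p.1 + p.2))! : ℝ)⁻¹ := div_eq_mul_inv _ _
      _ ≤ a ^ p.1 * b ^ p.2 * (m ! / ((m + 1 + p.1)! * (m + 1 + p.2)!)) := by
        gcongr
        exact (inv_factorial_lt_factorial_div m p.1 p.2).le
      _ = _ := by ring
  rw [expTailSlope, expTail_mul_expTail, ← tsum_mul_left]
  refine Summable.tsum_lt_tsum (i := 0) hle ?_
    (.of_nonneg_of_le (fun n => by positivity) hle (hprod.mul_left _)) (hprod.mul_left _)
  simpa [div_eq_mul_inv, mul_inv] using inv_factorial_lt_factorial_div m 0 0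

lemma gPo_succ_eq (m : ℕ) {x : ℝ} (hx : 0 < x) :
    gPo (m + 1) x = x + 1 / (m ! * expTail (m + 1) x) := by
  have := expTail_pos (m + 1) hx.le
  rw [gPo, Nat.add_sub_cancel, fPo_eq, fPo_eq, expTail_eq_inv_factorial_add m x]
  field_simp
  ring

lemma htil_succ_eq (m : ℕ) {x : ℝ} (hx : 0 < x) : htil (m + 1) x = 1 / (m ! * expTail m x) := by
  have := expTail_pos m hx.le
  rw [htil, Nat.add_sub_cancel, fPo_eq]
  field_simp

lemma gPo_succ_strictMonoOn (m : ℕ) : StrictMonoOn (gPo (m + 1)) (Set.Ioi 0) := by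
  intro a (ha : 0 < a) b (hb : 0 < b) hab
  have hEa := expTail_pos (m + 1) ha.le
  have hEb := expTail_pos (m + 1) hb.le
  have hslope : (b - a) * expTailSlope (m + 1) a b <
      (b - a) * (m ! * (expTail (m + 1) a * expTail (m + 1) b)) :=
    mul_lt_mul_of_pos_left (expTailSlope_lt_mul m ha.le hb.le) (sub_pos.mpr hab)
  have hsub : 1 / (m ! * expTail (m + 1) a) - 1 / (m ! * expTail (m + 1) b) =
      (b - a) * expTailSlope (m + 1) a b / (m ! * (expTail (m + 1) a * expTail (m + 1) b)) := by
    rw [← expTail_sub_expTail]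
    field_simp
  rw [gPo_succ_eq m ha, gPo_succ_eq m hb]
  have hlt := (div_lt_iff₀ (by positivity)).mpr hslope
  linarith

lemma htil_succ_strictAntiOn (m : ℕ) : StrictAntiOn (htil (m + 1)) (Set.Ioi 0) := by
  intro a (ha : 0 < a) b (hb : 0 < b) hab
  rw [htil_succ_eq m ha, htil_succ_eq m hb]
  have := expTail_pos m ha.le
  gcongr
  exact expTail_strictMonoOn m ha.le hb.le hab

theorem stmt4 (k : ℕ) (hk : 2 ≤ k) :
    ∀ x₁ x₂ l₁ l₂ : ℝ, (k : ℝ) < x₁ → x₁ < x₂ → 0 < l₁ → 0 < l₂ →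
      gPo k l₁ = x₁ → gPo k l₂ = x₂ → htil k l₂ < htil k l₁ := by
  obtain ⟨m, rfl⟩ : ∃ m, k = m + 1 := ⟨k - 1, by omega⟩
  rintro x₁ x₂ l₁ l₂ - hx hl₁ hl₂ rfl rfl
  exact htil_succ_strictAntiOn m hl₁ hl₂ ((gPo_succ_strictMonoOn m).lt_iff_lt hl₁ hl₂ |>.mp hx)
end

section
/- Fix integers k, r ≥ 2 with (r, k) ≠ (2, 2), and set x* = r(k−1) − r/(r−1). Then for every real x ≥ x*, one has e^{−x} x^{k−1} / (f_{k−1}(x)·(k−2)!) < 1/(r−1). -/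
/-! With `j = k - 1`, `s = r - 1` and `tᵢ = xⁱ / i!`, the claim reads `∑_{i ≥ j} tᵢ > s j tⱼ`.
The ratio `t_{j+m} / tⱼ` is `xᵐ / ((j+1)⋯(j+m))`, and pairing the factors of this product by
AM-GM shows it is at least `1` as long as `2j + m + 1 ≤ 2x`. For `x ≥ x*` this covers the first
`sj + 1` ratios whenever `s²j ≥ 3s + 2`. In the five remaining cases the ratios increase with `x`,
and the first five of them, evaluated at `x = x*`, already add up to more than `sj`. -/

/-- The paper's `x* = r(k-1) - r/(r-1)`, with `r = s + 1` and `k = j + 1`. -/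
noncomputable def tailThreshold (s j : ℕ) : ℝ := (s + 1) * j - (s + 1) / s

open Finset Nat

theorem Nat.ascFactorial_le_pow {x : ℝ} :
    ∀ n m : ℕ, 2 * (n : ℝ) + m ≤ 2 * x + 1 → (n.ascFactorial m : ℝ) ≤ x ^ m
  | n, 0, _ => by simp
  | n, 1, h => by push_cast at h; simp [Nat.ascFactorial]; linarith
  | n, m + 2, h => by
    push_cast at h
    have ih := Nat.ascFactorial_le_pow (n + 1) m (by push_cast; linarith)
    have hn : (0 : ℝ) ≤ n := n.cast_nonneg
    have hm : (0 : ℝ) ≤ m := m.cast_nonneg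
    -- AM-GM on the outermost pair of factors `n` and `n + m + 1`
    have outer : (n : ℝ) * (n + 1 + m) ≤ x ^ 2 := by
      nlinarith [sq_nonneg ((m : ℝ) + 1), sq_nonneg (2 * x - 2 * n - m - 1)]
    have split : n.ascFactorial (m + 2) = n * ((n + 1 + m) * (n + 1).ascFactorial m) := by
      rw [← Nat.ascFactorial_succ, Nat.succ_ascFactorial, Nat.ascFactorial_succ]
    calc (n.ascFactorial (m + 2) : ℝ) = n * (n + 1 + m) * ((n + 1).ascFactorial m : ℝ) := by
          rw [split]; push_cast; ring
      _ ≤ x ^ 2 * x ^ m := by gcongr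
      _ = x ^ (m + 2) := by ring

theorem sum_range_pow_div_le_of_le {y x : ℝ} (hy : 0 ≤ y) (hyx : y ≤ x) (d : ℕ → ℕ) (N : ℕ) :
    ∑ m ∈ range N, y ^ m / d m ≤ ∑ m ∈ range N, x ^ m / d m :=
  sum_le_sum fun m _ => div_le_div_of_nonneg_right (pow_le_pow_left₀ hy hyx m) (Nat.cast_nonneg _)

theorem sum_range_pow_div_factorial_add (j N : ℕ) (x : ℝ) :
    ∑ i ∈ range N, x ^ (j + i) / (j + i)! =
      x ^ j / j ! * ∑ m ∈ range N, x ^ m / (j + 1).ascFactorial m := by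
  rw [mul_sum]
  refine sum_congr rfl fun m _ => ?_
  rw [← Nat.factorial_mul_ascFactorial, Nat.cast_mul, pow_add, mul_div_mul_comm]

theorem summable_pow_add_div_factorial (j : ℕ) (x : ℝ) :
    Summable fun i : ℕ => x ^ (j + i) / (j + i)! := by
  simpa only [add_comm j] using (summable_nat_add_iff j).2 (Real.summable_pow_div_factorial x)

section Threshold

variable {s j : ℕ} {x : ℝ}

theorem tailThreshold_pos (hsj : 1 < s * j) : 0 < tailThreshold s j := by
  have hsj' : (1 : ℝ) < s * j := by exact_mod_cast hsj
  have hs : (0 : ℝ) < s := by exact_mod_cast Nat.pos_of_mul_pos_right (by omega : 0 < s * j)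
  have : ((s : ℝ) + 1) / s < (s + 1) * j := by rw [div_lt_iff₀ hs]; nlinarith
  unfold tailThreshold
  linarith

theorem lt_sum_range_pow_div_ascFactorial_of_le_sq_mul (hsj : 3 * s + 2 ≤ s ^ 2 * j)
    (hx : tailThreshold s j ≤ x) :
    (s * j : ℝ) < ∑ m ∈ range (s * j + 1), x ^ m / (j + 1).ascFactorial m := by
  have hs : (0 : ℝ) < s := by
    rcases s.eq_zero_or_pos with rfl | hs
    · simp at hsj
    · exact_mod_cast hs
  have hsjR : 3 * (s : ℝ) + 2 ≤ s ^ 2 * j := by exact_mod_cast hsj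
  have hgap : ((s : ℝ) + 1) / s ≤ (s * j - 1) / 2 := by
    rw [div_le_div_iff₀ hs two_pos]; nlinarith
  have hterm : ∀ m ∈ range (s * j + 1), (1 : ℝ) ≤ x ^ m / (j + 1).ascFactorial m := by
    intro m hm
    have hmle : (m : ℝ) ≤ s * j := by exact_mod_cast Nat.lt_succ_iff.1 (mem_range.1 hm)
    rw [one_le_div (by exact_mod_cast Nat.ascFactorial_pos j m)]
    exact Nat.ascFactorial_le_pow _ _ (by unfold tailThreshold at hx; push_cast; nlinarith)
  calc (s * j : ℝ) < (s * j + 1 : ℕ) := by push_cast; linarith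
    _ = ∑ m ∈ range (s * j + 1), (1 : ℝ) := by simp
    _ ≤ _ := sum_le_sum hterm

theorem exists_lt_sum_range_pow_div_ascFactorial (hsj : 1 < s * j) (hx : tailThreshold s j ≤ x) :
    ∃ N, (s * j : ℝ) < ∑ m ∈ range N, x ^ m / (j + 1).ascFactorial m := by
  by_cases hbig : 3 * s + 2 ≤ s ^ 2 * j
  · exact ⟨_, lt_sum_range_pow_div_ascFactorial_of_le_sq_mul hbig hx⟩
  have hs : 1 ≤ s := Nat.pos_of_mul_pos_right (by omega : 0 < s * j)
  have hj : 1 ≤ j := Nat.pos_of_mul_pos_left (by omega : 0 < s * j)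
  have hs3 : s ≤ 3 := by by_contra! h; exact hbig (by nlinarith)
  have hj4 : j ≤ 4 := by by_contra! h; exact hbig (by nlinarith)
  interval_cases s <;> interval_cases j <;> first
  | omega
  | exact ⟨5, lt_of_lt_of_le (by norm_num [tailThreshold, Finset.sum_range_succ])
      (sum_range_pow_div_le_of_le (by norm_num [tailThreshold]) hx _ 5)⟩

theorem mul_pow_div_factorial_lt_tsum (hsj : 1 < s * j) (hx : tailThreshold s j ≤ x) :
    s * j * (x ^ j / j !) < ∑' i, x ^ (j + i) / (j + i)! := by
  obtain ⟨N, hN⟩ := exists_lt_sum_range_pow_div_ascFactorial hsj hx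
  have hx0 : 0 < x := (tailThreshold_pos hsj).trans_le hx
  calc s * j * (x ^ j / j !)
      < x ^ j / j ! * ∑ m ∈ range N, x ^ m / (j + 1).ascFactorial m := by
        rw [mul_comm]; gcongr
    _ = ∑ i ∈ range N, x ^ (j + i) / (j + i)! := (sum_range_pow_div_factorial_add j N x).symm
    _ ≤ _ := (summable_pow_add_div_factorial j x).sum_le_tsum _ fun i _ => by positivity

end Threshold

theorem stmt7 (k r : ℕ) (hk : 2 ≤ k) (hr : 2 ≤ r) (hne : ¬(r = 2 ∧ k = 2)) :
    ∀ x : ℝ, (r : ℝ) * ((k : ℝ) - 1) - (r : ℝ) / ((r : ℝ) - 1) ≤ x →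
      Real.exp (-x) * x ^ (k - 1) / (fPo (k - 1) x * (Nat.factorial (k - 2) : ℝ)) <
        1 / ((r : ℝ) - 1) := by
  obtain ⟨j, rfl⟩ : ∃ j, k = j + 1 := ⟨k - 1, by omega⟩
  obtain ⟨s, rfl⟩ : ∃ s, r = s + 1 := ⟨r - 1, by omega⟩
  have hsj : 1 < s * j := by by_contra! h; exact hne ⟨by nlinarith, by nlinarith⟩
  intro x hx
  rw [show j + 1 - 1 = j by omega, show j + 1 - 2 = j - 1 by omega, fPo, mul_assoc,
    mul_div_mul_left _ _ (Real.exp_pos _).ne']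
  push_cast at hx ⊢
  simp only [add_sub_cancel_right] at hx ⊢
  have hx0 : 0 < x := (tailThreshold_pos hsj).trans_le hx
  have hj : (j : ℝ) ≠ 0 := by exact_mod_cast (show j ≠ 0 by omega)
  have hbound : s * x ^ j / (j - 1)! < ∑' i, x ^ (j + i) / (j + i)! := by
    calc s * x ^ j / (j - 1)! = s * j * (x ^ j / j !) := by
          rw [← Nat.mul_factorial_pred (show j ≠ 0 by omega), Nat.cast_mul]; field_simp
      _ < _ := mul_pow_div_factorial_lt_tsum hsj hx
  rw [div_lt_iff₀ (by positivity)] at hbound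
  rw [div_lt_div_iff₀ (by nlinarith [pow_pos hx0 j]) (by exact_mod_cast (show 0 < s by omega))]
  linarith
end
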